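/- Let G₃ = ⟨g₁, g₂, g₃ ∣ g₂g₁ = g₁^{-1}g₂, g₃g₁ = g₁^{-1}g₃, g₃g₂ = g₂g₃⟩. A map ψ : G₃ → G₃ is an automorphism if and only if there exist a, e, f, h, i ∈ ℤ and ε ∈ {1, -1} with e·i − f·h = ±1, e ≡ i (mod 2), f ≡ h (mod 2), and e + f odd, such that ψ(g₁) = g₁^{ε}, ψ(g₂) = g₁^{a} g₂^{e} g₃^{f}, and ψ(g₃) = g₁^{a} g₂^{h} g₃^{i}. -/

import Mathlib

/-!
Sending `(x, y, z)` to `g₁^x g₂^y g₃^z` identifies `G₃` with `ℤ ⋊ ℤ²`, where `(y, z)` acts on `ℤ`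
by `(-1)^(y+z)`: the relations bring every element into this normal form, and the semidirect
product satisfies them. Conjugation by `g₂` inverts `g₁`, which forces every endomorphism `χ` of the
model to map `g₁` into `⟨g₁⟩`, say to `g₁^ε`; so `χ` induces multiplication by `ε` on `⟨g₁⟩` and the
integer matrix `[[e, h], [f, i]]` on the quotient `ℤ²`, and it is bijective iff both are, i.e. iff
`ε = ±1` and `e i - f h = ±1`. When `χ g₁ ≠ 1`, conjugation by `χ g₂` and `χ g₃` still has to invert
it, so `e + f` and `h + i` are odd; two such elements commute only if their `g₁`-exponents agree,
and the congruences mod 2 follow from the determinant being odd.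
-/

/-- The relators `g₂g₁g₂⁻¹g₁`, `g₃g₁g₃⁻¹g₁`, `g₃g₂g₃⁻¹g₂⁻¹` presenting the
group `⟨g₁, g₂, g₃ ∣ g₂g₁ = g₁⁻¹g₂, g₃g₁ = g₁⁻¹g₃, g₃g₂ = g₂g₃⟩`. -/
def polyZRelsB0 : Set (FreeGroup (Fin 3)) :=
  {FreeGroup.of 1 * FreeGroup.of 0 * (FreeGroup.of 1)⁻¹ * FreeGroup.of 0,
   FreeGroup.of 2 * FreeGroup.of 0 * (FreeGroup.of 2)⁻¹ * FreeGroup.of 0,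
   FreeGroup.of 2 * FreeGroup.of 1 * (FreeGroup.of 2)⁻¹ * (FreeGroup.of 1)⁻¹}

lemma SemiconjBy.inv_left_of_inv {H : Type*} [Group H] {c a : H} (h : SemiconjBy c a a⁻¹) :
    SemiconjBy c⁻¹ a a⁻¹ := by
  simpa using h.inv_right.inv_symm_left

lemma SemiconjBy.of_mul_mul_inv_mul_eq_one {H : Type*} [Group H] {c a : H}
    (h : c * a * c⁻¹ * a = 1) : SemiconjBy c a a⁻¹ := by
  rw [SemiconjBy, ← mul_inv_eq_iff_eq_mul, eq_inv_of_mul_eq_one_left h]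

namespace PolyZB0

section TwoByTwo

variable {e f h i : ℤ}

lemma eq_zero_of_isUnit_det (hd : IsUnit (e * i - f * h)) {y z : ℤ}
    (h₁ : e * y + h * z = 0) (h₂ : f * y + i * z = 0) : y = 0 ∧ z = 0 := by
  have hy : y * (e * i - f * h) = 0 := by linear_combination i * h₁ - h * h₂
  have hz : z * (e * i - f * h) = 0 := by linear_combination e * h₂ - f * h₁
  simpa [hd.ne_zero] using And.intro hy hz

lemma exists_solution_of_isUnit_det (hd : IsUnit (e * i - f * h)) (y z : ℤ) :
    ∃ y' z', e * y' + h * z' = y ∧ f * y' + i * z' = z :=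
  have hdd := Int.isUnit_mul_self hd
  ⟨(e * i - f * h) * (i * y - h * z), (e * i - f * h) * (e * z - f * y),
    by linear_combination y * hdd, by linear_combination z * hdd⟩

lemma isUnit_det_of_solutions {y₁ z₁ y₂ z₂ : ℤ} (h₁ : e * y₁ + h * z₁ = 1)
    (h₂ : f * y₁ + i * z₁ = 0) (h₃ : f * y₂ + i * z₂ = 1) :
    IsUnit (e * i - f * h) :=
  IsUnit.of_mul_eq_one (y₁ * z₂ - z₁ * y₂) <| by
    linear_combination (f * y₂ + i * z₂) * h₁ + h₃ - (e * y₂ + h * z₂) * h₂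

lemma emod_two_eq_of_odd_det (hef : Odd (e + f)) (hhi : Odd (h + i))
    (hd : Odd (e * i - f * h)) : e % 2 = i % 2 ∧ f % 2 = h % 2 := by
  have key : ∀ a b c d : ZMod 2, a + b = 1 → c + d = 1 → a * d - b * c = 1 → a = d ∧ b = c := by
    decide
  simp only [← ZMod.intCast_eq_one_iff_odd, Int.cast_add, Int.cast_sub, Int.cast_mul] at hef hhi hd
  simpa [ZMod.intCast_eq_intCast_iff'] using key _ _ _ _ hef hhi hd

end TwoByTwo

def IsStandardAut {H : Type*} [Group H] (ψ : H →* H) (g₁ g₂ g₃ : H) : Prop :=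
  ∃ (a e f h i ε : ℤ), (ε = 1 ∨ ε = -1) ∧
    (e * i - f * h = 1 ∨ e * i - f * h = -1) ∧
    e % 2 = i % 2 ∧ f % 2 = h % 2 ∧ Odd (e + f) ∧
    ψ g₁ = g₁ ^ ε ∧ ψ g₂ = g₁ ^ a * g₂ ^ e * g₃ ^ f ∧
    ψ g₃ = g₁ ^ a * g₂ ^ h * g₃ ^ i

section Transport

variable {H K : Type*} [Group H] [Group K] (Φ : H ≃* K) (ψ : H →* H)

lemma bijective_conj_iff :
    Function.Bijective ((Φ : H →* K).comp (ψ.comp (Φ.symm : K →* H))) ↔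
      Function.Bijective ψ := by
  simp only [MonoidHom.coe_comp, MonoidHom.coe_coe]
  rw [EquivLike.comp_bijective, EquivLike.bijective_comp]

lemma isStandardAut_conj_iff (g₁ g₂ g₃ : H) :
    IsStandardAut ((Φ : H →* K).comp (ψ.comp (Φ.symm : K →* H))) (Φ g₁) (Φ g₂) (Φ g₃) ↔
      IsStandardAut ψ g₁ g₂ g₃ := by
  simp only [IsStandardAut, MonoidHom.comp_apply, MonoidHom.coe_coe, MulEquiv.symm_apply_apply,
    ← map_zpow, ← map_mul, EmbeddingLike.apply_eq_iff_eq]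

end Transport

/-- `ℤ ⋊ ℤ²` with `(y, z)` acting by `(-1)^(y+z)`; `⟨x, y, z⟩` stands for `g₁^x g₂^y g₃^z`. -/
@[ext] structure Model where
  x : ℤ
  y : ℤ
  z : ℤ

namespace Model

def sign (u : Model) : ℤ := (u.y + u.z).negOnePow

instance : Mul Model := ⟨fun u v => ⟨u.x + u.sign * v.x, u.y + v.y, u.z + v.z⟩⟩
instance : One Model := ⟨⟨0, 0, 0⟩⟩
instance : Inv Model := ⟨fun u => ⟨-(u.sign * u.x), -u.y, -u.z⟩⟩

@[simp] lemma mul_x (u v : Model) : (u * v).x = u.x + u.sign * v.x := rfl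
@[simp] lemma mul_y (u v : Model) : (u * v).y = u.y + v.y := rfl
@[simp] lemma mul_z (u v : Model) : (u * v).z = u.z + v.z := rfl
@[simp] lemma inv_x (u : Model) : u⁻¹.x = -(u.sign * u.x) := rfl
@[simp] lemma inv_y (u : Model) : u⁻¹.y = -u.y := rfl
@[simp] lemma inv_z (u : Model) : u⁻¹.z = -u.z := rfl
@[simp] lemma one_x : (1 : Model).x = 0 := rfl
@[simp] lemma one_y : (1 : Model).y = 0 := rfl
@[simp] lemma one_z : (1 : Model).z = 0 := rfl

@[simp] lemma sign_mul (u v : Model) : (u * v).sign = u.sign * v.sign := by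
  simp only [sign, mul_y, mul_z, Int.negOnePow_add, Units.val_mul]
  ring

@[simp] lemma sign_inv (u : Model) : u⁻¹.sign = u.sign := by
  simp only [sign, inv_y, inv_z, ← neg_add, Int.negOnePow_neg]

instance : Group Model where
  mul_assoc u v w := by ext <;> simp <;> ring
  one_mul u := by ext <;> simp [sign]
  mul_one u := by ext <;> simp
  inv_mul_cancel u := by ext <;> simp

lemma zpow_y (u : Model) (n : ℤ) : (u ^ n).y = n * u.y := by
  induction n using Int.induction_on with
  | zero => simp
  | succ n ih => rw [zpow_add_one, mul_y, ih]; ring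
  | pred n ih => rw [zpow_sub_one, mul_y, inv_y, ih]; ring

lemma zpow_z (u : Model) (n : ℤ) : (u ^ n).z = n * u.z := by
  induction n using Int.induction_on with
  | zero => simp
  | succ n ih => rw [zpow_add_one, mul_z, ih]; ring
  | pred n ih => rw [zpow_sub_one, mul_z, inv_z, ih]; ring

def m₁ : Model := ⟨1, 0, 0⟩
def m₂ : Model := ⟨0, 1, 0⟩
def m₃ : Model := ⟨0, 0, 1⟩

lemma m₁_zpow (n : ℤ) : m₁ ^ n = ⟨n, 0, 0⟩ := by
  induction n using Int.induction_on with
  | zero => rfl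
  | succ n ih => rw [zpow_add_one, ih]; ext <;> simp [m₁, sign]
  | pred n ih => rw [zpow_sub_one, ih]; ext <;> simp [sub_eq_add_neg, m₁, sign]

lemma m₂_zpow (n : ℤ) : m₂ ^ n = ⟨0, n, 0⟩ := by
  induction n using Int.induction_on with
  | zero => rfl
  | succ n ih => rw [zpow_add_one, ih]; ext <;> simp [m₂]
  | pred n ih => rw [zpow_sub_one, ih]; ext <;> simp [sub_eq_add_neg, m₂]

lemma m₃_zpow (n : ℤ) : m₃ ^ n = ⟨0, 0, n⟩ := by
  induction n using Int.induction_on with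
  | zero => rfl
  | succ n ih => rw [zpow_add_one, ih]; ext <;> simp [m₃]
  | pred n ih => rw [zpow_sub_one, ih]; ext <;> simp [sub_eq_add_neg, m₃]

lemma m₁_zpow_mul_m₂_zpow_mul_m₃_zpow (x y z : ℤ) : m₁ ^ x * m₂ ^ y * m₃ ^ z = ⟨x, y, z⟩ := by
  ext <;> simp [m₁_zpow, m₂_zpow, m₃_zpow, sign]

lemma eq_m₁_zpow_mul_m₂_zpow_mul_m₃_zpow (u : Model) : u = m₁ ^ u.x * m₂ ^ u.y * m₃ ^ u.z := by
  rw [m₁_zpow_mul_m₂_zpow_mul_m₃_zpow]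

lemma m₂_mul_m₁_mul_inv : m₂ * m₁ * m₂⁻¹ = m₁⁻¹ := by
  ext <;> simp [m₁, m₂, sign]

lemma m₃_mul_m₁_mul_inv : m₃ * m₁ * m₃⁻¹ = m₁⁻¹ := by
  ext <;> simp [m₁, m₃, sign]

lemma m₃_mul_m₂ : m₃ * m₂ = m₂ * m₃ := by
  ext <;> simp [m₂, m₃, sign]

lemma m₁_ne_one : m₁ ≠ 1 := by simp [m₁, Model.ext_iff]

lemma eq_m₁_zpow {u : Model} (hy : u.y = 0) (hz : u.z = 0) : u = m₁ ^ u.x := by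
  ext <;> simp [m₁_zpow, hy, hz]

lemma yz_eq_zero_of_mul_mul_inv_eq_inv {u w : Model} (h : u * w * u⁻¹ = w⁻¹) :
    w.y = 0 ∧ w.z = 0 := by
  have hy := congrArg y h
  have hz := congrArg z h
  simp only [mul_y, mul_z, inv_y, inv_z] at hy hz
  omega

lemma odd_of_mul_mul_inv_eq_inv {u w : Model} (h : u * w * u⁻¹ = w⁻¹) (hw : w ≠ 1) :
    Odd (u.y + u.z) := by
  obtain ⟨hy, hz⟩ := yz_eq_zero_of_mul_mul_inv_eq_inv h
  have hw_sign : w.sign = 1 := by simp [sign, hy, hz]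
  by_contra hodd
  have hu_sign : u.sign = 1 := by
    simp [sign, Int.negOnePow_even _ (Int.not_odd_iff_even.1 hodd)]
  have hx := congrArg x h
  simp only [mul_x, inv_x, sign_mul, hw_sign, hu_sign] at hx
  have hx0 : w.x = 0 := by linarith
  exact hw (by ext <;> simp [hx0, hy, hz])

lemma x_eq_of_commute {u w : Model} (h : u * w = w * u) (hu : Odd (u.y + u.z))
    (hw : Odd (w.y + w.z)) : u.x = w.x := by
  have hx := congrArg x h
  simp only [mul_x, sign, Int.negOnePow_odd _ hu, Int.negOnePow_odd _ hw] at hx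
  push_cast at hx
  omega

section Endomorphism

variable (χ : Model →* Model)

lemma map_m₁_yz : (χ m₁).y = 0 ∧ (χ m₁).z = 0 :=
  yz_eq_zero_of_mul_mul_inv_eq_inv (u := χ m₂) (by
    simpa only [map_mul, map_inv] using congrArg χ m₂_mul_m₁_mul_inv)

lemma map_y (u : Model) : (χ u).y = (χ m₂).y * u.y + (χ m₃).y * u.z := by
  conv_lhs => rw [eq_m₁_zpow_mul_m₂_zpow_mul_m₃_zpow u]
  simp [zpow_y, (map_m₁_yz χ).1, mul_comm]

lemma map_z (u : Model) : (χ u).z = (χ m₂).z * u.y + (χ m₃).z * u.z := by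
  conv_lhs => rw [eq_m₁_zpow_mul_m₂_zpow_mul_m₃_zpow u]
  simp [zpow_z, (map_m₁_yz χ).2, mul_comm]

end Endomorphism

variable {χ : Model →* Model}

lemma odd_map_m₂ (hχ : χ m₁ ≠ 1) : Odd ((χ m₂).y + (χ m₂).z) :=
  odd_of_mul_mul_inv_eq_inv
    (by simpa only [map_mul, map_inv] using congrArg χ m₂_mul_m₁_mul_inv) hχ

lemma odd_map_m₃ (hχ : χ m₁ ≠ 1) : Odd ((χ m₃).y + (χ m₃).z) :=
  odd_of_mul_mul_inv_eq_inv
    (by simpa only [map_mul, map_inv] using congrArg χ m₃_mul_m₁_mul_inv) hχ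

lemma map_m₃_x (hχ : χ m₁ ≠ 1) : (χ m₃).x = (χ m₂).x :=
  x_eq_of_commute (by simpa only [map_mul] using congrArg χ m₃_mul_m₂) (odd_map_m₃ hχ)
    (odd_map_m₂ hχ)

lemma isUnit_det_of_surjective (hχ : Function.Surjective χ) :
    IsUnit ((χ m₂).y * (χ m₃).z - (χ m₂).z * (χ m₃).y) := by
  obtain ⟨u₂, hu₂⟩ := hχ m₂
  obtain ⟨u₃, hu₃⟩ := hχ m₃
  have h₂y := map_y χ u₂
  have h₂z := map_z χ u₂
  have h₃z := map_z χ u₃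
  simp only [hu₂, hu₃, m₂, m₃] at h₂y h₂z h₃z
  exact isUnit_det_of_solutions h₂y.symm h₂z.symm h₃z.symm

lemma isUnit_map_m₁_x (hχ : Function.Surjective χ) : IsUnit (χ m₁).x := by
  obtain ⟨u, hu⟩ := hχ m₁
  obtain ⟨hy, hz⟩ := eq_zero_of_isUnit_det (isUnit_det_of_surjective hχ)
    (by simpa [hu, m₁] using (map_y χ u).symm) (by simpa [hu, m₁] using (map_z χ u).symm)
  obtain ⟨hy₁, hz₁⟩ := map_m₁_yz χ
  have h := congrArg x hu
  rw [eq_m₁_zpow hy hz, map_zpow, eq_m₁_zpow hy₁ hz₁, ← zpow_mul, m₁_zpow] at h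
  exact IsUnit.of_mul_eq_one _ h

lemma injective_of_isUnit {ε : ℤ} (hε : IsUnit ε) (h₁ : χ m₁ = m₁ ^ ε)
    (hd : IsUnit ((χ m₂).y * (χ m₃).z - (χ m₂).z * (χ m₃).y)) : Function.Injective χ := by
  refine (injective_iff_map_eq_one χ).2 fun u hu => ?_
  obtain ⟨hy, hz⟩ := eq_zero_of_isUnit_det hd
    (by simpa [hu] using (map_y χ u).symm) (by simpa [hu] using (map_z χ u).symm)
  rw [eq_m₁_zpow hy hz, map_zpow, h₁, ← zpow_mul, m₁_zpow] at hu
  have hx : u.x = 0 := by simpa [hε.ne_zero] using congrArg x hu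
  rw [eq_m₁_zpow hy hz, hx, zpow_zero]

lemma surjective_of_isUnit {ε : ℤ} (hε : IsUnit ε) (h₁ : χ m₁ = m₁ ^ ε)
    (hd : IsUnit ((χ m₂).y * (χ m₃).z - (χ m₂).z * (χ m₃).y)) : Function.Surjective χ := by
  intro v
  obtain ⟨y, z, hy, hz⟩ := exists_solution_of_isUnit_det hd v.y v.z
  set w := χ ⟨0, y, z⟩
  have hvw : v * w⁻¹ = m₁ ^ (v * w⁻¹).x :=
    eq_m₁_zpow (by simp [w, map_y χ ⟨0, y, z⟩, hy]) (by simp [w, map_z χ ⟨0, y, z⟩, hz])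
  refine ⟨m₁ ^ (ε * (v * w⁻¹).x) * ⟨0, y, z⟩, ?_⟩
  rw [map_mul, map_zpow, h₁, ← zpow_mul, ← mul_assoc, Int.isUnit_mul_self hε, one_mul, ← hvw,
    inv_mul_cancel_right]

theorem bijective_iff_isStandardAut : Function.Bijective χ ↔ IsStandardAut χ m₁ m₂ m₃ := by
  constructor
  · intro hχ
    have hne : χ m₁ ≠ 1 := by simpa using hχ.1.ne m₁_ne_one
    obtain ⟨hy₁, hz₁⟩ := map_m₁_yz χ
    have hd := isUnit_det_of_surjective hχ.2
    have hd_odd : Odd ((χ m₂).y * (χ m₃).z - (χ m₂).z * (χ m₃).y) := by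
      rcases Int.isUnit_iff.1 hd with h | h <;> rw [h] <;> decide
    obtain ⟨hei, hfh⟩ := emod_two_eq_of_odd_det (odd_map_m₂ hne) (odd_map_m₃ hne) hd_odd
    refine ⟨(χ m₂).x, (χ m₂).y, (χ m₂).z, (χ m₃).y, (χ m₃).z, (χ m₁).x,
      Int.isUnit_iff.1 (isUnit_map_m₁_x hχ.2), Int.isUnit_iff.1 hd, hei, hfh, odd_map_m₂ hne,
      eq_m₁_zpow hy₁ hz₁, (m₁_zpow_mul_m₂_zpow_mul_m₃_zpow _ _ _).symm, ?_⟩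
    rw [m₁_zpow_mul_m₂_zpow_mul_m₃_zpow, ← map_m₃_x hne]
  · rintro ⟨a, e, f, h, i, ε, hε, hd, -, -, -, h₁, h₂, h₃⟩
    rw [m₁_zpow_mul_m₂_zpow_mul_m₃_zpow] at h₂ h₃
    have hd' : IsUnit ((χ m₂).y * (χ m₃).z - (χ m₂).z * (χ m₃).y) := by
      rw [h₂, h₃]
      exact Int.isUnit_iff.2 hd
    exact ⟨injective_of_isUnit (Int.isUnit_iff.2 hε) h₁ hd',
      surjective_of_isUnit (Int.isUnit_iff.2 hε) h₁ hd'⟩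

end Model

local notation "G₃" => PresentedGroup polyZRelsB0

def g₁ : G₃ := PresentedGroup.of 0
def g₂ : G₃ := PresentedGroup.of 1
def g₃ : G₃ := PresentedGroup.of 2

lemma semiconjBy_g₂_g₁ : SemiconjBy g₂ g₁ g₁⁻¹ :=
  .of_mul_mul_inv_mul_eq_one (PresentedGroup.one_of_mem (Or.inl rfl))

lemma semiconjBy_g₃_g₁ : SemiconjBy g₃ g₁ g₁⁻¹ :=
  .of_mul_mul_inv_mul_eq_one (PresentedGroup.one_of_mem (Or.inr (Or.inl rfl)))

lemma commute_g₃_g₂ : Commute g₃ g₂ :=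
  commutatorElement_eq_one_iff_commute.1 (PresentedGroup.one_of_mem (Or.inr (Or.inr rfl)))

lemma mul_g₁_zpow_mul {c : G₃} (hc : SemiconjBy c g₁ g₁⁻¹) (x : ℤ) (w : G₃) :
    c * (g₁ ^ x * w) = g₁ ^ (-x) * (c * w) := by
  rw [← mul_assoc, (hc.zpow_right x).eq, inv_zpow', mul_assoc]

lemma closure_g₁_g₂_g₃ : Subgroup.closure {g₁, g₂, g₃} = ⊤ := by
  rw [← PresentedGroup.closure_range_of]
  congr 1
  ext
  simp [Fin.exists_fin_succ, g₁, g₂, g₃, eq_comm]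

lemma exists_eq_g₁_zpow_mul_g₂_zpow_mul_g₃_zpow (g : G₃) :
    ∃ x y z : ℤ, g₁ ^ x * g₂ ^ y * g₃ ^ z = g := by
  have hg : g ∈ Subgroup.closure {g₁, g₂, g₃} := by simp [closure_g₁_g₂_g₃]
  induction hg using Subgroup.closure_induction_left with
  | one => exact ⟨0, 0, 0, by simp⟩
  | mul_left s hs g _ ih =>
    obtain ⟨x, y, z, rfl⟩ := ih
    simp only [mul_assoc]
    rcases hs with rfl | rfl | rfl
    · exact ⟨1 + x, y, z, by group⟩
    · refine ⟨-x, 1 + y, z, ?_⟩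
      rw [mul_g₁_zpow_mul semiconjBy_g₂_g₁]
      group
    · refine ⟨-x, y, 1 + z, ?_⟩
      rw [mul_g₁_zpow_mul semiconjBy_g₃_g₁, (commute_g₃_g₂.zpow_right y).left_comm]
      group
  | inv_mul_cancel s hs g _ ih =>
    obtain ⟨x, y, z, rfl⟩ := ih
    simp only [mul_assoc]
    rcases hs with rfl | rfl | rfl
    · exact ⟨-1 + x, y, z, by group⟩
    · refine ⟨-x, -1 + y, z, ?_⟩
      rw [mul_g₁_zpow_mul semiconjBy_g₂_g₁.inv_left_of_inv]
      group
    · refine ⟨-x, y, -1 + z, ?_⟩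
      rw [mul_g₁_zpow_mul semiconjBy_g₃_g₁.inv_left_of_inv,
        (commute_g₃_g₂.inv_left.zpow_right y).left_comm]
      group

open Model

def toModel : G₃ →* Model :=
  PresentedGroup.toGroup (f := ![m₁, m₂, m₃]) <| by
    rintro r (rfl | rfl | rfl) <;> ext <;> simp [m₁, m₂, m₃, sign]

lemma toModel_g₁_zpow_mul_g₂_zpow_mul_g₃_zpow (x y z : ℤ) :
    toModel (g₁ ^ x * g₂ ^ y * g₃ ^ z) = ⟨x, y, z⟩ := by
  simp [toModel, g₁, g₂, g₃, m₁_zpow_mul_m₂_zpow_mul_m₃_zpow]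

lemma bijective_toModel : Function.Bijective toModel := by
  refine ⟨fun g g' hgg' => ?_, fun u => ⟨_, toModel_g₁_zpow_mul_g₂_zpow_mul_g₃_zpow u.x u.y u.z⟩⟩
  obtain ⟨x, y, z, rfl⟩ := exists_eq_g₁_zpow_mul_g₂_zpow_mul_g₃_zpow g
  obtain ⟨x', y', z', rfl⟩ := exists_eq_g₁_zpow_mul_g₂_zpow_mul_g₃_zpow g'
  simp only [toModel_g₁_zpow_mul_g₂_zpow_mul_g₃_zpow, Model.mk.injEq] at hgg'
  rw [hgg'.1, hgg'.2.1, hgg'.2.2]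

noncomputable def equivModel : G₃ ≃* Model := MulEquiv.ofBijective toModel bijective_toModel

lemma equivModel_g₁ : equivModel g₁ = m₁ := by simp [equivModel, toModel, g₁]
lemma equivModel_g₂ : equivModel g₂ = m₂ := by simp [equivModel, toModel, g₂]
lemma equivModel_g₃ : equivModel g₃ = m₃ := by simp [equivModel, toModel, g₃]

end PolyZB0

open PolyZB0

/-- In `G₃ = ⟨g₁, g₂, g₃ ∣ g₂g₁ = g₁⁻¹g₂, g₃g₁ = g₁⁻¹g₃, g₃g₂ = g₂g₃⟩`, a
group homomorphism `ψ : G₃ →* G₃` is an automorphism (i.e. bijective) if and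
only if there exist `a, e, f, h, i ∈ ℤ` and `ε ∈ {1, -1}` with
`e·i − f·h = ±1`, `e ≡ i (mod 2)`, `f ≡ h (mod 2)` and `e + f` odd such that
`ψ g₁ = g₁^ε`, `ψ g₂ = g₁^a g₂^e g₃^f`, and `ψ g₃ = g₁^a g₂^h g₃^i`. -/
theorem polyZ_b0_aut_characterization
    (ψ : PresentedGroup polyZRelsB0 →* PresentedGroup polyZRelsB0) :
    letI G₃ := PresentedGroup polyZRelsB0
    letI g₁ : G₃ := PresentedGroup.of 0
    letI g₂ : G₃ := PresentedGroup.of 1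
    letI g₃ : G₃ := PresentedGroup.of 2
    Function.Bijective ψ ↔
      ∃ (a e f h i ε : ℤ), (ε = 1 ∨ ε = -1) ∧
        (e * i - f * h = 1 ∨ e * i - f * h = -1) ∧
        e % 2 = i % 2 ∧ f % 2 = h % 2 ∧ Odd (e + f) ∧
        ψ g₁ = g₁ ^ ε ∧ ψ g₂ = g₁ ^ a * g₂ ^ e * g₃ ^ f ∧
        ψ g₃ = g₁ ^ a * g₂ ^ h * g₃ ^ i := by
  show Function.Bijective ψ ↔ IsStandardAut ψ g₁ g₂ g₃
  rw [← bijective_conj_iff equivModel, ← isStandardAut_conj_iff equivModel, equivModel_g₁,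
    equivModel_g₂, equivModel_g₃]
  exact Model.bijective_iff_isStandardAut
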